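/- Let A = K·1_A ⊕ A₀ be a unital K-algebra whose decomposition satisfies A₀·A₀ ⊆ K·1_A, let B be a unital K-algebra and σ : B → B an involution. Then the linear map R : B⊗A → A⊗B defined by R(b⊗1_A) = 1_A⊗b and R(b⊗a) = a⊗σ(b) for all a∈A₀, b∈B, is an alternative twisting map. -/

import Mathlib

/-!
Write `a = k • 1 + x` and `a' = k' • 1 + y` with `x, y ∈ A₀`, and `x * y = μ • 1`. Both sides of the
product axiom then equal `(k k' + μ) • (1 ⊗ b) + (k • y + k' • x) ⊗ σ b`: on the right, the term
`x * y` arises from `R (σ b ⊗ y) = y ⊗ σ (σ b)`, and `σ² = id` returns it to `(x * y) ⊗ b`.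
The module axiom on `A₀` is `σ (b b') = σ b' σ b`, and the unit axiom follows from `σ 1 = 1`.
-/

open TensorProduct LinearMap

section TwistPreamble

variable (K : Type*) [Field K]
variable (A : Type*) [NonAssocRing A] [Module K A] [SMulCommClass K A A] [IsScalarTower K A A]
variable (B : Type*) [NonAssocRing B] [Module K B] [SMulCommClass K B B] [IsScalarTower K B B]

/-- Sweedler helper: sends `Σ aR ⊗ bR` in `A ⊗ B` to `Σ (aR * a'_r) ⊗ (bR)_r`,
where `R((bR) ⊗ a') = a'_r ⊗ (bR)_r`. -/
noncomputable def attpRmul (R : B ⊗[K] A →ₗ[K] A ⊗[K] B) (a' : A) :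
    A ⊗[K] B →ₗ[K] A ⊗[K] B :=
  (rTensor B (LinearMap.mul' K A)) ∘ₗ (TensorProduct.assoc K A A B).symm.toLinearMap ∘ₗ
    (lTensor A (R ∘ₗ (TensorProduct.mk K B A).flip a'))

/-- Sweedler helper: sends `Σ aR ⊗ b'R` in `A ⊗ B` to `Σ (aR)_r ⊗ (b'R * b_r)`,
where `R(b ⊗ aR) = (aR)_r ⊗ b_r`. -/
noncomputable def attpLmul (R : B ⊗[K] A →ₗ[K] A ⊗[K] B) (b : B) :
    A ⊗[K] B →ₗ[K] A ⊗[K] B :=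
  (lTensor A ((LinearMap.mul' K B) ∘ₗ (TensorProduct.comm K B B).toLinearMap)) ∘ₗ
    (TensorProduct.assoc K A B B).toLinearMap ∘ₗ
    (rTensor B (R ∘ₗ (TensorProduct.mk K B A) b))

/-- `R : B ⊗ A → A ⊗ B` is an alternative twisting map w.r.t. the decomposition
`A = K·1_A ⊕ A₀`. -/
def IsAltTwistingMap (A₀ : Submodule K A) (R : B ⊗[K] A →ₗ[K] A ⊗[K] B) : Prop :=
  (∀ a : A, R ((1 : B) ⊗ₜ[K] a) = a ⊗ₜ[K] (1 : B)) ∧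
  (∀ b : B, R (b ⊗ₜ[K] (1 : A)) = (1 : A) ⊗ₜ[K] b) ∧
  (∀ (a a' : A) (b : B), R (b ⊗ₜ[K] (a * a')) = attpRmul K A B R a' (R (b ⊗ₜ[K] a))) ∧
  (∀ a ∈ A₀, ∀ b b' : B, R ((b * b') ⊗ₜ[K] a) = attpLmul K A B R b (R (b' ⊗ₜ[K] a)))

/-- `m` is the multiplication of the alternative twisted tensor product `A ⊗̄_R B`:
`(1⊗b)(a'⊗b') = a'_R ⊗ b_R b'` and, for `a ∈ A₀`, `(a⊗b)(a'⊗b') = a a'_R ⊗ b' b_R`. -/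
def IsAltMul (A₀ : Submodule K A) (R : B ⊗[K] A →ₗ[K] A ⊗[K] B)
    (m : A ⊗[K] B →ₗ[K] A ⊗[K] B →ₗ[K] A ⊗[K] B) : Prop :=
  (∀ (b : B) (a' : A) (b' : B),
      m ((1 : A) ⊗ₜ[K] b) (a' ⊗ₜ[K] b') = (lTensor A (mulRight K b')) (R (b ⊗ₜ[K] a'))) ∧
  (∀ a ∈ A₀, ∀ (b : B) (a' : A) (b' : B),
      m (a ⊗ₜ[K] b) (a' ⊗ₜ[K] b') =
        (TensorProduct.map (mulLeft K a) (mulLeft K b')) (R (b ⊗ₜ[K] a')))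

end TwistPreamble

section SweedlerHelpers

variable {K A B : Type*} [Field K] [NonAssocRing A] [Module K A] [NonAssocRing B] [Module K B]

theorem attpRmul_tmul [SMulCommClass K A A] [IsScalarTower K A A]
    (R : B ⊗[K] A →ₗ[K] A ⊗[K] B) (a' u : A) (v : B) :
    attpRmul K A B R a' (u ⊗ₜ[K] v) = rTensor B (mulLeft K u) (R (v ⊗ₜ[K] a')) := by
  simp only [attpRmul, coe_comp, Function.comp_apply, lTensor_tmul, flip_apply, mk_apply,
    LinearEquiv.coe_coe]
  induction R (v ⊗ₜ[K] a') with
  | zero => simp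
  | tmul x y => simp
  | add p q hp hq => simp only [tmul_add, map_add, hp, hq]

theorem attpLmul_tmul [SMulCommClass K B B] [IsScalarTower K B B]
    (R : B ⊗[K] A →ₗ[K] A ⊗[K] B) (b : B) (u : A) (v : B) :
    attpLmul K A B R b (u ⊗ₜ[K] v) = lTensor A (mulLeft K v) (R (b ⊗ₜ[K] u)) := by
  simp only [attpLmul, coe_comp, Function.comp_apply, rTensor_tmul, mk_apply,
    LinearEquiv.coe_coe]
  induction R (b ⊗ₜ[K] u) with
  | zero => simp
  | tmul x y => simp
  | add p q hp hq => simp only [add_tmul, map_add, hp, hq]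

end SweedlerHelpers

theorem Submodule.exists_smul_add_mem_of_codisjoint {R M : Type*} [Semiring R] [AddCommMonoid M]
    [Module R M] {e : M} {N : Submodule R M} (h : Codisjoint (R ∙ e) N) (m : M) :
    ∃ k : R, ∃ x ∈ N, m = k • e + x := by
  have hm : m ∈ (R ∙ e) ⊔ N := h.eq_top ▸ Submodule.mem_top
  obtain ⟨y, hy, x, hx, rfl⟩ := Submodule.mem_sup.mp hm
  obtain ⟨k, rfl⟩ := Submodule.mem_span_singleton.mp hy
  exact ⟨k, x, hx, rfl⟩

theorem smul_one_add_mul_smul_one_add {K A : Type*} [CommSemiring K] [NonAssocSemiring A]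
    [Module K A] [SMulCommClass K A A] [IsScalarTower K A A] {x y : A} {μ : K}
    (hxy : x * y = μ • 1) (k k' : K) :
    (k • 1 + x) * (k' • 1 + y) = (k * k' + μ) • 1 + (k • y + k' • x) := by
  simp only [add_mul, mul_add, hxy, smul_mul_assoc, mul_smul_comm, one_mul, mul_one]
  module

section InvolutionTwist

variable {K A B : Type*} [Field K] [NonAssocRing A] [Module K A] [NonAssocRing B] [Module K B]
  {A₀ : Submodule K A} {σ : B →ₗ[K] B} {R : B ⊗[K] A →ₗ[K] A ⊗[K] B}

theorem apply_tmul_smul_one_add (hR1 : ∀ b : B, R (b ⊗ₜ[K] (1 : A)) = (1 : A) ⊗ₜ[K] b)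
    (hR0 : ∀ a ∈ A₀, ∀ b : B, R (b ⊗ₜ[K] a) = a ⊗ₜ[K] σ b) (b : B) (k : K) {x : A} (hx : x ∈ A₀) :
    R (b ⊗ₜ[K] (k • (1 : A) + x)) = k • ((1 : A) ⊗ₜ[K] b) + x ⊗ₜ[K] σ b := by
  rw [tmul_add, map_add, tmul_smul, map_smul, hR1, hR0 x hx]

theorem apply_one_tmul_of_codisjoint (hdec : Codisjoint (K ∙ (1 : A)) A₀) (hσone : σ 1 = 1)
    (hR1 : ∀ b : B, R (b ⊗ₜ[K] (1 : A)) = (1 : A) ⊗ₜ[K] b)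
    (hR0 : ∀ a ∈ A₀, ∀ b : B, R (b ⊗ₜ[K] a) = a ⊗ₜ[K] σ b) (a : A) :
    R ((1 : B) ⊗ₜ[K] a) = a ⊗ₜ[K] (1 : B) := by
  obtain ⟨k, x, hx, rfl⟩ := Submodule.exists_smul_add_mem_of_codisjoint hdec a
  rw [apply_tmul_smul_one_add hR1 hR0 1 k hx, hσone, add_tmul, smul_tmul']

theorem apply_tmul_mul_of_codisjoint [SMulCommClass K A A] [IsScalarTower K A A]
    (hdec : Codisjoint (K ∙ (1 : A)) A₀)
    (h00 : ∀ x ∈ A₀, ∀ y ∈ A₀, x * y ∈ K ∙ (1 : A)) (hσinv : ∀ x : B, σ (σ x) = x)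
    (hR1 : ∀ b : B, R (b ⊗ₜ[K] (1 : A)) = (1 : A) ⊗ₜ[K] b)
    (hR0 : ∀ a ∈ A₀, ∀ b : B, R (b ⊗ₜ[K] a) = a ⊗ₜ[K] σ b) (a a' : A) (b : B) :
    R (b ⊗ₜ[K] (a * a')) = attpRmul K A B R a' (R (b ⊗ₜ[K] a)) := by
  obtain ⟨k, x, hx, rfl⟩ := Submodule.exists_smul_add_mem_of_codisjoint hdec a
  obtain ⟨k', y, hy, rfl⟩ := Submodule.exists_smul_add_mem_of_codisjoint hdec a'
  obtain ⟨μ, hμ⟩ := Submodule.mem_span_singleton.mp (h00 x hx y hy)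
  have hmem : k • y + k' • x ∈ A₀ := A₀.add_mem (A₀.smul_mem _ hy) (A₀.smul_mem _ hx)
  rw [smul_one_add_mul_smul_one_add hμ.symm, apply_tmul_smul_one_add hR1 hR0 b _ hmem,
    apply_tmul_smul_one_add hR1 hR0 b k hx, map_add, map_smul, attpRmul_tmul, attpRmul_tmul,
    apply_tmul_smul_one_add hR1 hR0 b k' hy, apply_tmul_smul_one_add hR1 hR0 (σ b) k' hy, hσinv]
  simp only [map_add, map_smul, rTensor_tmul, mulLeft_apply, one_mul, mul_one, ← hμ, add_tmul,
    ← smul_tmul']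
  module

theorem apply_mul_tmul_of_mem [SMulCommClass K B B] [IsScalarTower K B B]
    (hσmul : ∀ x y : B, σ (x * y) = σ y * σ x)
    (hR0 : ∀ a ∈ A₀, ∀ b : B, R (b ⊗ₜ[K] a) = a ⊗ₜ[K] σ b) {a : A} (ha : a ∈ A₀) (b b' : B) :
    R ((b * b') ⊗ₜ[K] a) = attpLmul K A B R b (R (b' ⊗ₜ[K] a)) := by
  rw [hR0 a ha, hR0 a ha, attpLmul_tmul, hR0 a ha, lTensor_tmul, mulLeft_apply, hσmul]

end InvolutionTwist

/-- if `A = K·1_A ⊕ A₀` with `A₀·A₀ ⊆ K·1_A` and `σ` is an involution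
of `B`, then the map `R : B ⊗ A → A ⊗ B` with `R(b⊗1_A) = 1_A⊗b` and
`R(b⊗a) = a⊗σ(b)` for `a ∈ A₀` is an alternative twisting map. -/
theorem stmt12 (K A B : Type*) [Field K]
    [NonAssocRing A] [Module K A] [SMulCommClass K A A] [IsScalarTower K A A]
    [NonAssocRing B] [Module K B] [SMulCommClass K B B] [IsScalarTower K B B]
    (A₀ : Submodule K A) (hdec : IsCompl (Submodule.span K {(1 : A)}) A₀)
    (h00 : ∀ x ∈ A₀, ∀ y ∈ A₀, x * y ∈ Submodule.span K {(1 : A)})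
    (σ : B →ₗ[K] B) (hσmul : ∀ x y : B, σ (x * y) = σ y * σ x)
    (hσone : σ 1 = 1) (hσinv : ∀ x : B, σ (σ x) = x)
    (R : B ⊗[K] A →ₗ[K] A ⊗[K] B)
    (hR1 : ∀ b : B, R (b ⊗ₜ[K] (1 : A)) = (1 : A) ⊗ₜ[K] b)
    (hR0 : ∀ a ∈ A₀, ∀ b : B, R (b ⊗ₜ[K] a) = a ⊗ₜ[K] σ b) :
    IsAltTwistingMap K A B A₀ R :=
  ⟨apply_one_tmul_of_codisjoint hdec.codisjoint hσone hR1 hR0, hR1,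
    apply_tmul_mul_of_codisjoint hdec.codisjoint h00 hσinv hR1 hR0,
    fun _ ha => apply_mul_tmul_of_mem hσmul hR0 ha⟩
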